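/- arXiv:0705.1690 — 2 statements merged into one kernel-verified Lean document; each statement's English description precedes it below -/
import Mathlib

section
/- For every irrational x ∈ (0,1), the semi-Brjuno function satisfies the functional equation B_0(x) = log(1/x) + x·B_0(−1/x), as an identity in [0,∞] (note that −1/x is irrational and B_0(−1/x) = B_0(−1/x − ⌊−1/x⌋)). -/
/-!
For irrational `x > 0`, `1/x` is not an integer, so `-1/x ≡ 1 - fract (1/x) = A_0(x)` modulo 1:
the orbit defining `B_0(-1/x)` is the orbit of `x` shifted by one step. Splitting off the
`n = 0` term of the series for `B_0(x)` and factoring `y_0 = x` out of the rest gives the equation.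
-/

open Set Filter
open scoped ENNReal

/-- The by-excess continued fraction map `A_0(x) = ⌊1/x + 1⌋ − 1/x`. -/
noncomputable def exm (x : ℝ) : ℝ := ⌊1 / x + 1⌋ - 1 / x

/-- The semi-Brjuno function `B_0(x) = ∑_{n≥0} β*_{n−1}·log(1/y_n) ∈ [0,∞]`, where
`y_0 = x − ⌊x⌋`, `y_{n+1} = A_0(y_n)` and `β*_{n−1} = y_0⋯y_{n−1}` (`β*_{-1} = 1`). -/
noncomputable def B0 (x : ℝ) : ℝ≥0∞ :=
  ∑' n : ℕ, ENNReal.ofReal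
    ((∏ i ∈ Finset.range n, exm^[i] (Int.fract x)) * Real.log (1 / (exm^[n] (Int.fract x))))

theorem exm_eq_one_sub_fract (x : ℝ) : exm x = 1 - Int.fract (1 / x) := by
  rw [exm, Int.floor_add_one, Int.fract]
  push_cast
  ring

theorem fract_neg_one_div_eq_exm {x : ℝ} (hx : Int.fract (1 / x) ≠ 0) :
    Int.fract (-1 / x) = exm x := by
  rw [neg_div, Int.fract_neg hx, exm_eq_one_sub_fract]

theorem Irrational.fract_ne_zero {x : ℝ} (hx : Irrational x) : Int.fract x ≠ 0 := by
  rintro hfract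
  obtain ⟨m, rfl⟩ := Int.fract_eq_zero_iff.mp hfract
  exact hx.ne_int m rfl

noncomputable def excessBrjunoSum (y : ℝ) : ℝ≥0∞ :=
  ∑' n : ℕ, ENNReal.ofReal ((∏ i ∈ Finset.range n, exm^[i] y) * Real.log (1 / exm^[n] y))

theorem B0_eq_excessBrjunoSum_fract (x : ℝ) : B0 x = excessBrjunoSum (Int.fract x) := rfl

theorem excessBrjunoSum_eq_log_add_mul {y : ℝ} (hy : 0 ≤ y) :
    excessBrjunoSum y =
      ENNReal.ofReal (Real.log (1 / y)) + ENNReal.ofReal y * excessBrjunoSum (exm y) := by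
  rw [excessBrjunoSum, excessBrjunoSum, tsum_eq_zero_add' ENNReal.summable,
    ← ENNReal.tsum_mul_left]
  congr 1
  · simp
  · refine tsum_congr fun n => ?_
    rw [Finset.prod_range_succ', Function.iterate_zero_apply, mul_comm _ y, mul_assoc,
      ENNReal.ofReal_mul hy]
    simp only [Function.iterate_succ_apply]

/-- For every irrational `x ∈ (0,1)`, the semi-Brjuno function satisfies the
functional equation `B_0(x) = log(1/x) + x·B_0(−1/x)`, as an identity in `[0,∞]`. -/
theorem semiB_functional_equation (x : ℝ) (hirr : Irrational x)
    (hx : x ∈ Set.Ioo (0 : ℝ) 1) :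
    B0 x = ENNReal.ofReal (Real.log (1 / x)) + ENNReal.ofReal x * B0 (-1 / x) := by
  have hfract_x : Int.fract x = x := Int.fract_eq_self.mpr ⟨hx.1.le, hx.2⟩
  have hfract_neg_inv : Int.fract (-1 / x) = exm x := by
    refine fract_neg_one_div_eq_exm (Irrational.fract_ne_zero ?_)
    simpa only [one_div] using hirr.inv
  rw [B0_eq_excessBrjunoSum_fract, B0_eq_excessBrjunoSum_fract, hfract_x, hfract_neg_inv]
  exact excessBrjunoSum_eq_log_add_mul hx.1.le
end

section
/- There exists an absolute constant C_2 > 0 such that for every irrational x ∈ (0,1), the series Σ_{j=0}^∞ log(a_{2j+1})/q_{2j} (over the odd-indexed regular partial quotients) and the series Σ_{n=0}^∞ log(b_{n+1} − 1)/q*_n (from the by-excess expansion) are simultaneously finite or infinite, and when finite one has | Σ_{j=0}^∞ log(a_{2j+1})/q_{2j} − Σ_{n=0}^∞ log(b_{n+1} − 1)/q*_n | < C_2. -/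
open Set Filter

/-- The Gauss map `G(t) = 1/t − ⌊1/t⌋`. -/
noncomputable def gmap (t : ℝ) : ℝ := 1 / t - ⌊1 / t⌋

/-- `ra y n = a_{n+1}(y) = ⌊1/G^n(y)⌋`, the regular continued fraction partial
quotients of `y`. -/
noncomputable def ra (y : ℝ) (n : ℕ) : ℤ := ⌊1 / (gmap^[n] y)⌋

/-- `qcf y (n+1) = q_n`, with `q_{-1} = 0`, `q_0 = 1` and
`q_{n+1} = a_{n+1}·q_n + q_{n−1}`: the denominators of the regular convergents. -/
noncomputable def qcf (y : ℝ) : ℕ → ℤ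
  | 0 => 0
  | 1 => 1
  | n + 2 => ra y n * qcf y (n + 1) + qcf y n

/-- `bEx x n = b_{n+1} = ⌊1/A_0^n(x) + 1⌋`, the by-excess digits of `x`. -/
noncomputable def bEx (x : ℝ) (n : ℕ) : ℤ := ⌊1 / (exm^[n] x) + 1⌋

/-- `qstar x (n+1) = q*_n`, with `q*_{-1} = 0`, `q*_0 = 1` and
`q*_n = b_n·q*_{n−1} − q*_{n−2}`. -/
noncomputable def qstar (x : ℝ) : ℕ → ℤ
  | 0 => 0
  | 1 => 1
  | n + 2 => bEx x n * qstar x (n + 1) - qstar x n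

/-!
Write `x = [0; a₁, a₂, …]` and `G` for the Gauss map; always `A₀ y = 1 - G y`. For `t ≠ 0`,
`1 / (t / (t + 1)) = 1 / t + 1`, so `A₀` maps `(t + 1) / (t + 2)` to `t / (t + 1)` with digit `2`
when `t > 0`, and `u / (u + 1)` to `1 - G u` with digit `⌊1 / u⌋ + 2`. As `1 - w = t / (t + 1)`
for `t = 1 / w - 1 = (⌊1 / w⌋ - 1) + G w`, the by-excess digits of `x` are
`a₁ + 1, 2 (a₂ - 1 times), a₃ + 2, 2 (a₄ - 1 times), a₅ + 2, …`.
Along each block of `2`s the `q*` form an arithmetic progression, which gives `q* = q_{2j}` at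
the digit `a_{2j+1} + 2`. The digits `2` contribute `log 1 = 0`, so the two series agree term by
term up to `log ((a + 1) / a) / q_{2j} ≤ 2⁻ʲ`, and these errors add up to at most `2`.
-/

open Function

lemma gmap_eq_fract (t : ℝ) : gmap t = Int.fract (1 / t) := rfl

lemma Irrational.gmap {y : ℝ} (hy : Irrational y) : Irrational (gmap y) := by
  simpa [gmap] using (one_div y ▸ hy.inv).sub_intCast ⌊1 / y⌋

lemma gmap_mem_Ioo {y : ℝ} (hy : Irrational y) : gmap y ∈ Ioo (0 : ℝ) 1 :=
  ⟨Int.fract_pos.2 ((one_div y ▸ hy.inv).ne_int _), Int.fract_lt_one _⟩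

lemma gmap_iterate_irrational_mem_Ioo {x : ℝ} (hx : Irrational x) (hx01 : x ∈ Ioo (0 : ℝ) 1)
    (n : ℕ) : Irrational (gmap^[n] x) ∧ gmap^[n] x ∈ Ioo (0 : ℝ) 1 := by
  induction n with
  | zero => exact ⟨hx, hx01⟩
  | succ n ih =>
    rw [iterate_succ_apply']
    exact ⟨ih.1.gmap, gmap_mem_Ioo ih.1⟩

lemma one_le_ra {x : ℝ} (hx : Irrational x) (hx01 : x ∈ Ioo (0 : ℝ) 1) (n : ℕ) :
    1 ≤ ra x n := by
  have h := (gmap_iterate_irrational_mem_Ioo hx hx01 n).2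
  exact Int.le_floor.2 (by exact_mod_cast (one_lt_one_div h.1 h.2).le)

lemma qcf_add_two (x : ℝ) (n : ℕ) : qcf x (n + 2) = ra x n * qcf x (n + 1) + qcf x n := rfl

section Convergents

variable {x : ℝ}

lemma qcf_nonneg_and_le_succ (hra : ∀ n, 1 ≤ ra x n) (n : ℕ) :
    0 ≤ qcf x n ∧ qcf x n ≤ qcf x (n + 1) := by
  induction n with
  | zero => simp [qcf]
  | succ n ih =>
    have := hra n
    exact ⟨by linarith, by rw [qcf_add_two]; nlinarith⟩

lemma two_pow_le_qcf (hra : ∀ n, 1 ≤ ra x n) (j : ℕ) : 2 ^ j ≤ qcf x (2 * j + 1) := by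
  induction j with
  | zero => simp [qcf]
  | succ j ih =>
    have h1 := qcf_nonneg_and_le_succ hra (2 * j + 1)
    have h2 := hra (2 * j + 1)
    rw [show 2 * (j + 1) + 1 = 2 * j + 1 + 2 by ring, qcf_add_two, pow_succ]
    nlinarith

end Convergents

section ByExcessMap

variable {t : ℝ}

lemma exm_eq_one_sub_gmap (y : ℝ) : exm y = 1 - gmap y := by
  simp only [exm, gmap, Int.floor_add_one]
  push_cast
  ring

lemma bEx_eq_floor_add_one (x : ℝ) (n : ℕ) : bEx x n = ⌊1 / exm^[n] x⌋ + 1 :=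
  Int.floor_add_one _

lemma bEx_add (x : ℝ) (n k : ℕ) : bEx x (n + k) = bEx (exm^[k] x) n := by
  simp only [bEx, iterate_add_apply]

lemma one_div_div_add_one (ht : t ≠ 0) : 1 / (t / (t + 1)) = 1 / t + 1 := by
  rw [one_div_div, add_div, div_self ht, add_comm]

lemma floor_one_div_div_add_one (ht : t ≠ 0) : ⌊1 / (t / (t + 1))⌋ = ⌊1 / t⌋ + 1 := by
  rw [one_div_div_add_one ht, Int.floor_add_one]

lemma exm_div_add_one (ht : t ≠ 0) : exm (t / (t + 1)) = 1 - gmap t := by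
  rw [exm_eq_one_sub_gmap, gmap_eq_fract, gmap_eq_fract, one_div_div_add_one ht,
    Int.fract_add_one]

lemma floor_one_div_of_one_lt (ht : 1 < t) : ⌊1 / t⌋ = 0 :=
  Int.floor_eq_zero_iff.2 ⟨by positivity, (div_lt_one (by linarith)).2 ht⟩

lemma exm_add_one_div_add_two (ht : 0 < t) : exm ((t + 1) / (t + 1 + 1)) = t / (t + 1) := by
  have ht1 : 1 < t + 1 := by linarith
  rw [exm_div_add_one (by linarith), gmap_eq_fract, Int.fract, floor_one_div_of_one_lt ht1]
  field_simp
  ring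

lemma exm_iterate_add_div (ht : 0 < t) (k : ℕ) :
    exm^[k] ((t + k) / (t + k + 1)) = t / (t + 1) := by
  induction k with
  | zero => simp
  | succ k ih =>
    have htk : 0 < t + k := by positivity
    rw [iterate_succ_apply, ← ih, Nat.cast_succ, ← add_assoc, exm_add_one_div_add_two htk]

lemma floor_one_div_exm_iterate_add_div (ht : 0 < t) {i k : ℕ} (hik : i < k) :
    ⌊1 / exm^[i] ((t + k) / (t + k + 1))⌋ = 1 := by
  have hs : 1 < t + ((k - i : ℕ) : ℝ) := by
    have : (1 : ℝ) ≤ ((k - i : ℕ) : ℝ) := by exact_mod_cast Nat.sub_pos_of_lt hik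
    linarith
  have hk : (t + k : ℝ) = t + ((k - i : ℕ) : ℝ) + i := by
    rw [Nat.cast_sub hik.le]
    ring
  rw [hk, exm_iterate_add_div (by linarith), floor_one_div_div_add_one (by linarith),
    floor_one_div_of_one_lt hs, zero_add]

end ByExcessMap

section Block

variable {w : ℝ} {m : ℕ}

lemma one_sub_eq_gmap_add_div (hw : w ≠ 0) (hm : (m : ℤ) + 1 = ⌊1 / w⌋) :
    1 - w = (gmap w + m) / (gmap w + m + 1) := by
  have hm' : (m : ℝ) = ⌊1 / w⌋ - 1 := by
    rw [← hm]
    push_cast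
    ring
  rw [gmap, hm']
  field_simp
  ring

lemma exm_iterate_one_sub (hw : Irrational w) (hm : (m : ℤ) + 1 = ⌊1 / w⌋) :
    exm^[m] (1 - w) = gmap w / (gmap w + 1) := by
  rw [one_sub_eq_gmap_add_div hw.ne_zero hm, exm_iterate_add_div (gmap_mem_Ioo hw).1]

lemma exm_iterate_succ_one_sub (hw : Irrational w) (hm : (m : ℤ) + 1 = ⌊1 / w⌋) :
    exm^[m + 1] (1 - w) = 1 - gmap (gmap w) := by
  rw [iterate_succ_apply', exm_iterate_one_sub hw hm, exm_div_add_one (gmap_mem_Ioo hw).1.ne']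

lemma bEx_one_sub_of_lt (hw : Irrational w) (hm : (m : ℤ) + 1 = ⌊1 / w⌋) {i : ℕ} (hi : i < m) :
    bEx (1 - w) i = 2 := by
  rw [bEx_eq_floor_add_one, one_sub_eq_gmap_add_div hw.ne_zero hm,
    floor_one_div_exm_iterate_add_div (gmap_mem_Ioo hw).1 hi]
  rfl

end Block

/-- `b_{oddDigitIndex x j + 1}` is the by-excess digit `a_{2j+1} + 2` (`a₁ + 1` for `j = 0`). -/
noncomputable def oddDigitIndex (x : ℝ) : ℕ → ℕ
  | 0 => 0
  | j + 1 => oddDigitIndex x j + (ra x (2 * j + 1)).toNat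

section OddDigitIndex

variable {x : ℝ}

lemma oddDigitIndex_succ_eq (hx : Irrational x) (hx01 : x ∈ Ioo (0 : ℝ) 1) (j : ℕ) :
    oddDigitIndex x (j + 1) = ((ra x (2 * j + 1)).toNat - 1) + (oddDigitIndex x j + 1) ∧
      (((ra x (2 * j + 1)).toNat - 1 : ℕ) : ℤ) + 1 = ra x (2 * j + 1) := by
  have := one_le_ra hx hx01 (2 * j + 1)
  simp only [oddDigitIndex]
  omega

lemma strictMono_oddDigitIndex (hx : Irrational x) (hx01 : x ∈ Ioo (0 : ℝ) 1) :
    StrictMono (oddDigitIndex x) :=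
  strictMono_nat_of_lt_succ fun j => by
    rw [(oddDigitIndex_succ_eq hx hx01 j).1]
    omega

lemma exm_iterate_oddDigitIndex_add_one (hx : Irrational x) (hx01 : x ∈ Ioo (0 : ℝ) 1)
    (j : ℕ) : exm^[oddDigitIndex x j + 1] x = 1 - gmap^[2 * j + 1] x := by
  induction j with
  | zero => exact exm_eq_one_sub_gmap x
  | succ j ih =>
    obtain ⟨hidx, hm⟩ := oddDigitIndex_succ_eq hx hx01 j
    rw [hidx, add_right_comm, iterate_add_apply, ih,
      exm_iterate_succ_one_sub (gmap_iterate_irrational_mem_Ioo hx hx01 _).1 hm,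
      show 2 * (j + 1) + 1 = 2 * j + 1 + 1 + 1 by ring, iterate_succ_apply' gmap (2 * j + 1 + 1),
      iterate_succ_apply' gmap (2 * j + 1)]

lemma bEx_zero (x : ℝ) : bEx x 0 = ra x 0 + 1 := bEx_eq_floor_add_one x 0

lemma bEx_oddDigitIndex_succ (hx : Irrational x) (hx01 : x ∈ Ioo (0 : ℝ) 1) (j : ℕ) :
    bEx x (oddDigitIndex x (j + 1)) = ra x (2 * (j + 1)) + 2 := by
  obtain ⟨hidx, hm⟩ := oddDigitIndex_succ_eq hx hx01 j
  have hw := (gmap_iterate_irrational_mem_Ioo hx hx01 (2 * j + 1)).1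
  rw [bEx_eq_floor_add_one, hidx, iterate_add_apply, exm_iterate_oddDigitIndex_add_one hx hx01,
    exm_iterate_one_sub hw hm, floor_one_div_div_add_one (gmap_mem_Ioo hw).1.ne', ra,
    show 2 * (j + 1) = 2 * j + 1 + 1 by ring, iterate_succ_apply' gmap (2 * j + 1)]
  ring

lemma bEx_eq_two (hx : Irrational x) (hx01 : x ∈ Ioo (0 : ℝ) 1) {j n : ℕ}
    (h₁ : oddDigitIndex x j < n) (h₂ : n < oddDigitIndex x (j + 1)) : bEx x n = 2 := by
  obtain ⟨hidx, hm⟩ := oddDigitIndex_succ_eq hx hx01 j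
  obtain ⟨i, rfl⟩ : ∃ i, n = i + (oddDigitIndex x j + 1) := ⟨n - (oddDigitIndex x j + 1), by omega⟩
  rw [bEx_add, exm_iterate_oddDigitIndex_add_one hx hx01]
  exact bEx_one_sub_of_lt (gmap_iterate_irrational_mem_Ioo hx hx01 _).1 hm (by omega)

lemma ra_le_bEx_oddDigitIndex_sub_one (hx : Irrational x) (hx01 : x ∈ Ioo (0 : ℝ) 1) (j : ℕ) :
    ra x (2 * j) ≤ bEx x (oddDigitIndex x j) - 1 ∧
      bEx x (oddDigitIndex x j) - 1 ≤ ra x (2 * j) + 1 := by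
  cases j with
  | zero => simp [oddDigitIndex, bEx_zero]
  | succ j => rw [bEx_oddDigitIndex_succ hx hx01]; omega

end OddDigitIndex

lemma eq_add_mul_of_eq_two_mul_sub {f : ℕ → ℤ} {a k : ℕ}
    (h : ∀ i < k, f (a + i + 2) = 2 * f (a + i + 1) - f (a + i)) {i : ℕ} (hi : i ≤ k) :
    f (a + i) = f a + i * (f (a + 1) - f a) ∧
      f (a + i + 1) = f a + (i + 1) * (f (a + 1) - f a) := by
  induction i with
  | zero => simp
  | succ i ih =>
    obtain ⟨h₀, h₁⟩ := ih (by omega)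
    refine ⟨by rw [← add_assoc, h₁]; push_cast; ring, ?_⟩
    rw [← add_assoc, h i (by omega), h₁, h₀]
    push_cast
    ring

lemma qstar_add_two (x : ℝ) (n : ℕ) :
    qstar x (n + 2) = bEx x n * qstar x (n + 1) - qstar x n := rfl

lemma qstar_oddDigitIndex {x : ℝ} (hx : Irrational x) (hx01 : x ∈ Ioo (0 : ℝ) 1) (j : ℕ) :
    qstar x (oddDigitIndex x j + 1) = qcf x (2 * j + 1) ∧
      qstar x (oddDigitIndex x j + 2) = qstar x (oddDigitIndex x j + 1) + qcf x (2 * j + 2) := by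
  induction j with
  | zero =>
    refine ⟨rfl, ?_⟩
    show bEx x 0 * 1 - 0 = 1 + (ra x 0 * 1 + 0)
    rw [bEx_zero]
    ring
  | succ j ih =>
    obtain ⟨hidx, hm⟩ := oddDigitIndex_succ_eq hx hx01 j
    set m := (ra x (2 * j + 1)).toNat - 1
    set a := oddDigitIndex x j + 1
    have hrec : ∀ i < m, qstar x (a + i + 2) = 2 * qstar x (a + i + 1) - qstar x (a + i) :=
      fun i hi => by
        rw [qstar_add_two, bEx_eq_two hx hx01 (j := j) (by omega) (by omega)]
    obtain ⟨hq₀, hq₁⟩ := eq_add_mul_of_eq_two_mul_sub hrec le_rfl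
    have hq : qcf x (2 * (j + 1) + 1) = qcf x (2 * j + 1) + (m + 1) * qcf x (2 * j + 2) := by
      rw [show 2 * (j + 1) + 1 = 2 * j + 1 + 2 by ring, qcf_add_two, ← hm]
      ring
    have hq' : qcf x (2 * (j + 1) + 2) =
        ra x (2 * (j + 1)) * qcf x (2 * (j + 1) + 1) + qcf x (2 * j + 2) := qcf_add_two _ _
    rw [ih.2, ih.1, add_comm a m, ← hidx] at hq₀ hq₁
    have h₁ : qstar x (oddDigitIndex x (j + 1) + 1) = qcf x (2 * (j + 1) + 1) := by
      rw [hq₁, hq]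
      ring
    refine ⟨h₁, ?_⟩
    rw [qstar_add_two, bEx_oddDigitIndex_succ hx hx01, h₁, hq₀, hq']
    linear_combination hq

lemma exists_le_lt_succ_of_strictMono {f : ℕ → ℕ} (hf : StrictMono f) (h₀ : f 0 = 0) (n : ℕ) :
    ∃ j, f j ≤ n ∧ n < f (j + 1) := by
  induction n with
  | zero => exact ⟨0, h₀.le, by have := hf (by omega : 0 < 0 + 1); omega⟩
  | succ n ih =>
    obtain ⟨j, h₁, h₂⟩ := ih
    by_cases h : n + 1 < f (j + 1)
    · exact ⟨j, by omega, h⟩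
    · exact ⟨j + 1, by omega, by have := hf (by omega : j + 1 < j + 1 + 1); omega⟩

lemma log_sub_log_le_one {a b : ℝ} (ha : 1 ≤ a) (hab : a ≤ b) (hb : b ≤ a + 1) :
    Real.log b - Real.log a ≤ 1 := by
  rw [← Real.log_div (by linarith) (by linarith)]
  have := Real.log_le_sub_one_of_pos (show 0 < b / a from div_pos (by linarith) (by linarith))
  have : b / a ≤ 1 + 1 := by rw [div_le_iff₀ (by linarith)]; linarith
  linarith

lemma log_ra_div_qcf_le {x : ℝ} (hx : Irrational x) (hx01 : x ∈ Ioo (0 : ℝ) 1) (j : ℕ) :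
    Real.log (ra x (2 * j)) / qcf x (2 * j + 1) ≤
        Real.log (bEx x (oddDigitIndex x j) - 1) / qstar x (oddDigitIndex x j + 1) ∧
      Real.log (bEx x (oddDigitIndex x j) - 1) / qstar x (oddDigitIndex x j + 1) ≤
        Real.log (ra x (2 * j)) / qcf x (2 * j + 1) + (1 / 2) ^ j := by
  obtain ⟨hlo, hhi⟩ := ra_le_bEx_oddDigitIndex_sub_one hx hx01 j
  have ha : (1 : ℝ) ≤ ra x (2 * j) := by exact_mod_cast one_le_ra hx hx01 (2 * j)
  have hlo' : (ra x (2 * j) : ℝ) ≤ bEx x (oddDigitIndex x j) - 1 := by exact_mod_cast hlo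
  have hhi' : (bEx x (oddDigitIndex x j) : ℝ) - 1 ≤ ra x (2 * j) + 1 := by exact_mod_cast hhi
  have hq : (2 : ℝ) ^ j ≤ qcf x (2 * j + 1) := by
    exact_mod_cast two_pow_le_qcf (one_le_ra hx hx01) j
  have hq0 : (0 : ℝ) < qcf x (2 * j + 1) := lt_of_lt_of_le (by positivity) hq
  rw [(qstar_oddDigitIndex hx hx01 j).1]
  refine ⟨by gcongr, ?_⟩
  have hlog := log_sub_log_le_one ha hlo' hhi'
  calc Real.log (bEx x (oddDigitIndex x j) - 1) / qcf x (2 * j + 1)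
      = Real.log (ra x (2 * j)) / qcf x (2 * j + 1) +
          (Real.log (bEx x (oddDigitIndex x j) - 1) - Real.log (ra x (2 * j))) /
            qcf x (2 * j + 1) := by ring
    _ ≤ Real.log (ra x (2 * j)) / qcf x (2 * j + 1) + 1 / 2 ^ j := by
        gcongr
    _ = _ := by rw [one_div_pow]

lemma summable_iff_and_abs_tsum_sub_le_two {F H : ℕ → ℝ} (hlo : ∀ j, F j ≤ H j)
    (hhi : ∀ j, H j ≤ F j + (1 / 2) ^ j) :
    (Summable F ↔ Summable H) ∧ (Summable F → |∑' j, F j - ∑' j, H j| ≤ 2) := by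
  have hsub : Summable fun j => H j - F j :=
    summable_geometric_two.of_nonneg_of_le (fun j => sub_nonneg.2 (hlo j))
      (fun j => by linarith [hhi j])
  refine ⟨(summable_iff_of_summable_sub hsub).symm, fun hF => ?_⟩
  have hH := (summable_iff_of_summable_sub hsub).2 hF
  rw [abs_sub_comm, ← hH.tsum_sub hF, abs_of_nonneg (tsum_nonneg fun j => sub_nonneg.2 (hlo j)),
    ← tsum_geometric_two]
  exact hsub.tsum_le_tsum (fun j => by linarith [hhi j]) summable_geometric_two

/-- There is an absolute constant `C_2 > 0` such that for every irrational
`x ∈ (0,1)`, the series `∑_{j≥0} log(a_{2j+1})/q_{2j}` (over the odd-indexed regular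
partial quotients) and `∑_{n≥0} log(b_{n+1} − 1)/q*_n` (from the by-excess expansion)
are simultaneously finite or infinite, and when finite their sums differ by less
than `C_2`. -/
theorem odd_log_a_series_close_to_excess_series :
    ∃ C : ℝ, 0 < C ∧ ∀ x : ℝ, Irrational x → x ∈ Set.Ioo (0 : ℝ) 1 →
      ((Summable fun j : ℕ => Real.log (ra x (2 * j) : ℝ) / (qcf x (2 * j + 1) : ℝ)) ↔
        (Summable fun n : ℕ => Real.log ((bEx x n : ℝ) - 1) / (qstar x (n + 1) : ℝ))) ∧
      ((Summable fun j : ℕ => Real.log (ra x (2 * j) : ℝ) / (qcf x (2 * j + 1) : ℝ)) →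
        |(∑' j : ℕ, Real.log (ra x (2 * j) : ℝ) / (qcf x (2 * j + 1) : ℝ)) -
          ∑' n : ℕ, Real.log ((bEx x n : ℝ) - 1) / (qstar x (n + 1) : ℝ)| < C) := by
  refine ⟨3, by norm_num, fun x hx hx01 => ?_⟩
  set G : ℕ → ℝ := fun n => Real.log ((bEx x n : ℝ) - 1) / (qstar x (n + 1) : ℝ)
  have hP := strictMono_oddDigitIndex hx hx01
  have hG : ∀ n ∉ range (oddDigitIndex x), G n = 0 := fun n hn => by
    obtain ⟨j, h₁, h₂⟩ := exists_le_lt_succ_of_strictMono hP rfl n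
    have h₁' : oddDigitIndex x j < n := lt_of_le_of_ne h₁ fun h => hn ⟨j, h⟩
    simp only [G, bEx_eq_two hx hx01 h₁' h₂]
    norm_num
  obtain ⟨hiff, hle⟩ := summable_iff_and_abs_tsum_sub_le_two (H := G ∘ oddDigitIndex x)
    (fun j => (log_ra_div_qcf_le hx hx01 j).1) (fun j => (log_ra_div_qcf_le hx hx01 j).2)
  refine ⟨hiff.trans (hP.injective.summable_iff hG), fun hF => ?_⟩
  rw [← hP.injective.tsum_eq (support_subset_iff'.2 hG)]
  exact (hle hF).trans_lt (by norm_num)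
end
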